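/- Consider first-passage percolation on the square lattice with weight distribution F. Assume that for all sufficiently large n the number of self-avoiding walks of length n on ℤ² starting at the origin is at most 2.7^n. Then almost surely, for all but finitely many n, every self-avoiding walk of length n starting at the origin has at least n/100 edges e with ω_e ≥ t_{1/3}. -/

import Mathlib

open MeasureTheory Filter
open scoped ENNReal

/-- Vertices of the square lattice. -/
abbrev V : Type := ℤ × ℤ

/-- Edges of the nearest-neighbour lattice on `ℤ²`, encoded as a vertex together with a
Boolean: `(v, true)` is the horizontal edge from `v` to `v + (1,0)`, and `(v, false)` is
the vertical edge from `v` to `v + (0,1)`. -/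
abbrev Edge : Type := V × Bool

/-- Two vertices of `ℤ²` are adjacent if they are at `ℓ¹`-distance one. -/
def AdjV (u v : V) : Prop := (u.1 - v.1).natAbs + (u.2 - v.2).natAbs = 1

/-- The edge between two adjacent vertices. -/
def stepEdge (u v : V) : Edge :=
  if v = (u.1 + 1, u.2) then (u, true)
  else if v = (u.1, u.2 + 1) then (u, false)
  else if u = (v.1 + 1, v.2) then (v, true)
  else (v, false)

/-- `γ` is a self-avoiding lattice path with `m` edges from `x` to `y`. -/
def IsPath (γ : ℕ → V) (m : ℕ) (x y : V) : Prop :=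
  γ 0 = x ∧ γ m = y ∧ (∀ k < m, AdjV (γ k) (γ (k + 1))) ∧ Set.InjOn γ (Set.Iic m)

/-- The total weight of the first `m` steps of the path `γ`. -/
noncomputable def pathWeight (w : Edge → ℝ) (γ : ℕ → V) (m : ℕ) : ℝ :=
  ∑ k ∈ Finset.range m, w (stepEdge (γ k) (γ (k + 1)))

/-- The first-passage time `T(x,y)`: the infimum of the total weight over all
self-avoiding lattice paths connecting `x` to `y`. -/
noncomputable def passageTime (w : Edge → ℝ) (x y : V) : ℝ :=
  sInf { s | ∃ m γ, IsPath γ m x y ∧ s = pathWeight w γ m }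

/-- The `q`-th quantile `t_q := inf {t ≥ 0 : F([0,t]) ≥ q}` of a distribution `F` on `[0,∞)`. -/
noncomputable def quantile (F : Measure ℝ) (q : ℝ) : ℝ :=
  sInf { t : ℝ | 0 ≤ t ∧ ENNReal.ofReal q ≤ F (Set.Icc 0 t) }

/-- `γ` is a self-avoiding walk of length `m` (i.e. with `m` edges) starting at the origin. -/
def IsSAW (γ : ℕ → V) (m : ℕ) : Prop :=
  γ 0 = (0, 0) ∧ (∀ k < m, AdjV (γ k) (γ (k + 1))) ∧ Set.InjOn γ (Set.Iic m)

/-- The number of self-avoiding walks of length `m` on `ℤ²` starting at the origin. -/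
noncomputable def sawCount (m : ℕ) : ℕ :=
  Set.ncard { f : Fin (m + 1) → V | ∃ γ : ℕ → V, IsSAW γ m ∧ f = fun k : Fin (m + 1) => γ k.val }

/-- The number of steps `k < m` of the path `γ` whose edge has weight at least `t`. -/
noncomputable def heavySteps (w : Edge → ℝ) (t : ℝ) (γ : ℕ → V) (m : ℕ) : ℕ :=
  ((Finset.range m).filter fun k => t ≤ w (stepEdge (γ k) (γ (k + 1)))).card

/-!
Put `t = t_{1/3}`, so that an edge is lighter than `t` with probability at most `1/3`. The edges of
a self-avoiding walk are distinct, so their weights are independent, and a walk of length `n` with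
fewer than `n/100` heavy edges has at least `m = n - ⌊n/100⌋` light ones, which has probability at most
`C(n, m) 3^{-m}`. A union bound over the at most `2.7^n` walks bounds the probability that
some walk of length `n` is bad by `0.97^n`, which is summable, and Borel–Cantelli concludes.
-/

open Finset ProbabilityTheory

theorem Nat.choose_mul_pow_le_add_one_pow {R : Type*} [CommSemiring R] [PartialOrder R]
    [IsOrderedRing R] {x : R} (hx : 0 ≤ x) {n m : ℕ} (hm : m ≤ n) :
    n.choose m * x ^ m ≤ (x + 1) ^ n := by
  rw [add_pow]
  simp only [one_pow, mul_one]
  calc (n.choose m : R) * x ^ m = x ^ m * n.choose m := mul_comm _ _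
    _ ≤ ∑ k ∈ range (n + 1), x ^ k * n.choose k :=
      single_le_sum (f := fun k => x ^ k * (n.choose k : R)) (fun _ _ => by positivity)
        (mem_range.2 (Nat.lt_succ_of_le hm))

theorem pow_mul_pow_div_le {R : Type*} [CommSemiring R] [PartialOrder R] [IsOrderedRing R]
    {a b c : R} {k : ℕ} (ha : 0 ≤ a) (hb : 0 ≤ b) (hac : a ≤ c) (h : a ^ k * b ≤ c ^ k)
    (n : ℕ) : a ^ n * b ^ (n / k) ≤ c ^ n := by
  have hc : 0 ≤ c := ha.trans hac
  calc a ^ n * b ^ (n / k) = a ^ (k * (n / k) + n % k) * b ^ (n / k) := by rw [Nat.div_add_mod]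
    _ = (a ^ k * b) ^ (n / k) * a ^ (n % k) := by rw [pow_add, pow_mul, mul_pow]; ring
    _ ≤ (c ^ k) ^ (n / k) * c ^ (n % k) := by gcongr
    _ = c ^ n := by rw [← pow_mul, ← pow_add, Nat.div_add_mod]

theorem pow_mul_choose_mul_pow_le (n : ℕ) :
    (2.7 : ℝ) ^ n * n.choose (n - n / 100) * (1 / 3) ^ (n - n / 100) ≤ 0.97 ^ n := by
  set q := n / 100
  set m := n - q
  have hn : n = m + q := by omega
  have hchoose : (n.choose m : ℝ) * 99 ^ m ≤ 100 ^ n := by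
    simpa [show (99 : ℝ) + 1 = 100 by norm_num] using
      Nat.choose_mul_pow_le_add_one_pow (by norm_num : (0 : ℝ) ≤ 99) (Nat.sub_le n q)
  -- `297 = 3 · 99` and `288.09 = 0.97 · 297`; the loss `297 ^ q` is paid for since `q ≤ n / 100`.
  have hloss : (270 : ℝ) ^ n * 297 ^ q ≤ 288.09 ^ n :=
    pow_mul_pow_div_le (by norm_num) (by norm_num) (by norm_num) (by norm_num) n
  calc (2.7 : ℝ) ^ n * n.choose m * (1 / 3) ^ m
      = (n.choose m * 99 ^ m) * 270 ^ n / (100 ^ n * 297 ^ m) := by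
        rw [show (2.7 : ℝ) = 270 / 100 by norm_num, show (297 : ℝ) = 3 * 99 by norm_num,
          mul_pow, div_pow, one_div_pow]
        field_simp
    _ ≤ 100 ^ n * 270 ^ n / (100 ^ n * 297 ^ m) := by gcongr
    _ = 270 ^ n * 297 ^ q / 297 ^ n := by
        rw [hn, pow_add (297 : ℝ)]; field_simp
    _ ≤ 288.09 ^ n / 297 ^ n := by gcongr
    _ = 0.97 ^ n := by rw [← div_pow]; norm_num

namespace ProbabilityTheory

variable {ι Ω β : Type*} [MeasurableSpace Ω] [MeasurableSpace β] {P : Measure Ω}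
  {μ : Measure β} {X : ι → Ω → β}

theorem iIndepFun.measure_biInter_preimage_eq_pow (hindep : iIndepFun X P)
    (hX : ∀ i, Measurable (X i)) (hdist : ∀ i, P.map (X i) = μ) {A : Set β}
    (hA : MeasurableSet A) (T : Finset ι) :
    P (⋂ i ∈ T, X i ⁻¹' A) = μ A ^ T.card := by
  rw [hindep.measure_inter_preimage_eq_mul T fun _ _ => hA, ← prod_const]
  refine prod_congr rfl fun i _ => ?_
  rw [← Measure.map_apply (hX i) hA, hdist i]

theorem iIndepFun.measure_le_card_filter_le (hindep : iIndepFun X P)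
    (hX : ∀ i, Measurable (X i)) (hdist : ∀ i, P.map (X i) = μ) {A : Set β}
    [DecidablePred (· ∈ A)] (hA : MeasurableSet A) {e : ℕ → ι} {n : ℕ}
    (he : Set.InjOn e (Set.Iio n)) (m : ℕ) :
    P {x | m ≤ ((range n).filter fun k => X (e k) x ∈ A).card} ≤ n.choose m * μ A ^ m := by
  calc P {x | m ≤ ((range n).filter fun k => X (e k) x ∈ A).card}
      ≤ P (⋃ S ∈ (range n).powersetCard m, ⋂ k ∈ S, X (e k) ⁻¹' A) := by
        refine measure_mono fun x hx => ?_
        obtain ⟨S, hS, hcard⟩ := exists_subset_card_eq hx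
        simp only [Set.mem_iUnion, Set.mem_iInter]
        exact ⟨S, mem_powersetCard.2 ⟨hS.trans (filter_subset _ _), hcard⟩,
          fun k hk => (mem_filter.1 (hS hk)).2⟩
    _ ≤ ∑ S ∈ (range n).powersetCard m, P (⋂ k ∈ S, X (e k) ⁻¹' A) :=
        measure_biUnion_finset_le _ _
    _ = ∑ _S ∈ (range n).powersetCard m, μ A ^ m := by
        classical
        refine sum_congr rfl fun S hS => ?_
        obtain ⟨hSn, hcard⟩ := mem_powersetCard.1 hS
        have hinj : Set.InjOn e S := he.mono fun k hk => by simpa using hSn hk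
        have himage : ⋂ k ∈ S, X (e k) ⁻¹' A = ⋂ i ∈ S.image e, X i ⁻¹' A :=
          (Finset.set_biInter_finset_image (f := e) (s := S) (g := fun i => X i ⁻¹' A)).symm
        rw [himage, hindep.measure_biInter_preimage_eq_pow hX hdist hA,
          card_image_of_injOn hinj, hcard]
    _ = n.choose m * μ A ^ m := by
        rw [sum_const, card_powersetCard, card_range, nsmul_eq_mul]

end ProbabilityTheory

theorem measure_Iio_le_of_forall_lt {μ : Measure ℝ} {t : ℝ} {c : ℝ≥0∞}
    (h : ∀ s < t, μ (Set.Iic s) ≤ c) : μ (Set.Iio t) ≤ c := by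
  obtain ⟨u, hu_mono, hu_lt, hu_lim⟩ := exists_seq_strictMono_tendsto t
  rw [← iUnion_Iic_eq_Iio_of_lt_of_tendsto hu_lt hu_lim,
    Monotone.measure_iUnion fun _ _ hab => Set.Iic_subset_Iic.2 (hu_mono.monotone hab)]
  exact iSup_le fun n => h _ (hu_lt n)

theorem measure_Iio_quantile_le {F : Measure ℝ} (hF : F (Set.Iio 0) = 0) (q : ℝ) :
    F (Set.Iio (quantile F q)) ≤ ENNReal.ofReal q := by
  refine measure_Iio_le_of_forall_lt fun s hs => ?_
  calc F (Set.Iic s) ≤ F (Set.Iio 0 ∪ Set.Icc 0 s) := by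
        refine measure_mono fun x hx => ?_
        rcases lt_or_ge x 0 with hx0 | hx0
        exacts [Or.inl hx0, Or.inr ⟨hx0, hx⟩]
    _ ≤ F (Set.Iio 0) + F (Set.Icc 0 s) := measure_union_le _ _
    _ ≤ ENNReal.ofReal q := by
        rw [hF, zero_add]
        rcases lt_or_ge s 0 with hs0 | hs0
        · simp [Set.Icc_eq_empty_of_lt hs0]
        · by_contra! hlt
          exact (csInf_le ⟨0, fun _ ht => ht.1⟩ ⟨hs0, hlt.le⟩ : quantile F q ≤ s).not_gt hs

def Edge.ends (e : Edge) : V × V :=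
  (e.1, if e.2 then (e.1.1 + 1, e.1.2) else (e.1.1, e.1.2 + 1))

theorem ends_stepEdge {u v : V} (h : AdjV u v) :
    (stepEdge u v).ends = (u, v) ∨ (stepEdge u v).ends = (v, u) := by
  obtain ⟨u1, u2⟩ := u; obtain ⟨v1, v2⟩ := v
  simp only [AdjV] at h
  unfold stepEdge Edge.ends
  split_ifs <;> simp_all [Prod.ext_iff]
  omega

theorem IsSAW.injOn_stepEdge {γ : ℕ → V} {n : ℕ} (h : IsSAW γ n) :
    Set.InjOn (fun k => stepEdge (γ k) (γ (k + 1))) (Set.Iio n) := by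
  intro k hk j hj hkj
  have inj : ∀ a b, a ≤ n → b ≤ n → γ a = γ b → a = b := fun a b ha hb => h.2.2 ha hb
  simp only [Set.mem_Iio] at hk hj hkj
  rcases ends_stepEdge (h.2.1 k hk) with hk' | hk' <;>
    rcases ends_stepEdge (h.2.1 j hj) with hj' | hj' <;>
    rw [hkj, hj', Prod.mk.injEq] at hk' <;> obtain ⟨h1, h2⟩ := hk' <;>
    have := inj _ _ (by omega) (by omega) h1 <;> have := inj _ _ (by omega) (by omega) h2 <;>
    omega

theorem IsSAW.natAbs_add_natAbs_le {γ : ℕ → V} {n : ℕ} (h : IsSAW γ n) {k : ℕ} (hk : k ≤ n) :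
    (γ k).1.natAbs + (γ k).2.natAbs ≤ k := by
  induction k with
  | zero => simp [h.1]
  | succ k ih =>
    have hstep := h.2.1 k (by omega)
    have := ih (by omega)
    unfold AdjV at hstep
    omega

theorem finite_setOf_isSAW_restrict (n : ℕ) :
    {f : Fin (n + 1) → V | ∃ γ, IsSAW γ n ∧ f = fun k : Fin (n + 1) => γ k}.Finite := by
  refine (Set.Finite.pi fun _ =>
    (Set.finite_Icc (-(n : ℤ)) n).prod (Set.finite_Icc (-(n : ℤ)) n)).subset ?_
  rintro f ⟨γ, hγ, rfl⟩ k -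
  have := hγ.natAbs_add_natAbs_le (Nat.lt_succ_iff.1 k.isLt)
  simp only [Set.mem_prod, Set.mem_Icc]
  omega

theorem heavySteps_congr {w : Edge → ℝ} {t : ℝ} {γ γ' : ℕ → V} {n : ℕ}
    (h : ∀ k ≤ n, γ k = γ' k) : heavySteps w t γ n = heavySteps w t γ' n := by
  unfold heavySteps
  congr 1
  refine filter_congr fun k hk => ?_
  rw [mem_range] at hk
  rw [h k hk.le, h (k + 1) hk]

theorem measure_exists_isSAW_le {Ω : Type*} [MeasurableSpace Ω] (P : Measure Ω) (n : ℕ)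
    (B : (ℕ → V) → Set Ω) (hB : ∀ γ γ', (∀ k ≤ n, γ k = γ' k) → B γ = B γ') {c : ℝ≥0∞}
    (hc : ∀ γ, IsSAW γ n → P (B γ) ≤ c) :
    P {x | ∃ γ, IsSAW γ n ∧ x ∈ B γ} ≤ sawCount n * c := by
  set restrict : (ℕ → V) → Fin (n + 1) → V := fun γ k => γ k
  have hfin := finite_setOf_isSAW_restrict n
  set lift := Function.invFunOn restrict {γ | IsSAW γ n}
  have hlift : ∀ γ, IsSAW γ n →
      IsSAW (lift (restrict γ)) n ∧ restrict (lift (restrict γ)) = restrict γ :=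
    fun γ hγ => Function.invFunOn_pos (f := restrict) (s := {γ | IsSAW γ n}) ⟨γ, hγ, rfl⟩
  calc P {x | ∃ γ, IsSAW γ n ∧ x ∈ B γ}
      ≤ P (⋃ f ∈ hfin.toFinset, B (lift f)) := by
        refine measure_mono fun x ⟨γ, hγ, hx⟩ => Set.mem_biUnion (x := restrict γ)
          (hfin.mem_toFinset.2 ⟨γ, hγ, rfl⟩) ?_
        rwa [hB (lift (restrict γ)) γ fun k hk =>
          congrFun (hlift γ hγ).2 ⟨k, Nat.lt_succ_of_le hk⟩]
    _ ≤ ∑ f ∈ hfin.toFinset, P (B (lift f)) := measure_biUnion_finset_le _ _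
    _ ≤ ∑ _f ∈ hfin.toFinset, c := by
        refine sum_le_sum fun f hf => ?_
        obtain ⟨γ, hγ, rfl⟩ := hfin.mem_toFinset.1 hf
        exact hc _ (hlift γ hγ).1
    _ = sawCount n * c := by
        rw [sum_const, nsmul_eq_mul, sawCount, Set.ncard_eq_toFinset_card _ hfin]

theorem le_card_filter_lt_of_heavySteps_lt {w : Edge → ℝ} {t : ℝ} {γ : ℕ → V} {n : ℕ}
    (h : (heavySteps w t γ n : ℝ) < n / 100) :
    n - n / 100 ≤ ((range n).filter fun k => w (stepEdge (γ k) (γ (k + 1))) < t).card := by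
  have h100 : 100 * heavySteps w t γ n < n := by
    exact_mod_cast (by linarith : (100 * heavySteps w t γ n : ℝ) < n)
  have hsplit := card_filter_add_card_filter_not (s := range n)
    (p := fun k => t ≤ w (stepEdge (γ k) (γ (k + 1))))
  simp only [card_range, not_le] at hsplit
  unfold heavySteps at h100
  omega

theorem measure_exists_isSAW_heavySteps_lt_le {Ω : Type*} [MeasurableSpace Ω] (P : Measure Ω)
    {F : Measure ℝ} (hF : F (Set.Iio 0) = 0) {w : Edge → Ω → ℝ} (hmeas : ∀ e, Measurable (w e))
    (hindep : iIndepFun w P) (hdist : ∀ e, P.map (w e) = F) (n : ℕ) :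
    P {x | ∃ γ, IsSAW γ n ∧ (heavySteps (fun e => w e x) (quantile F (1 / 3)) γ n : ℝ) < n / 100}
      ≤ ENNReal.ofReal (sawCount n * n.choose (n - n / 100) * (1 / 3) ^ (n - n / 100)) := by
  set t := quantile F (1 / 3)
  set m := n - n / 100
  have hwalk : ∀ γ, IsSAW γ n →
      P {x | (heavySteps (fun e => w e x) t γ n : ℝ) < n / 100}
        ≤ n.choose m * ENNReal.ofReal (1 / 3) ^ m := by
    intro γ hγ
    calc P {x | (heavySteps (fun e => w e x) t γ n : ℝ) < n / 100}
        ≤ P {x | m ≤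
            ((range n).filter fun k => w (stepEdge (γ k) (γ (k + 1))) x ∈ Set.Iio t).card} :=
          measure_mono fun _ => le_card_filter_lt_of_heavySteps_lt
      _ ≤ n.choose m * F (Set.Iio t) ^ m :=
          hindep.measure_le_card_filter_le hmeas hdist measurableSet_Iio hγ.injOn_stepEdge m
      _ ≤ n.choose m * ENNReal.ofReal (1 / 3) ^ m := by
          gcongr
          exact measure_Iio_quantile_le hF _
  calc _ ≤ sawCount n * (n.choose m * ENNReal.ofReal (1 / 3) ^ m) :=
        measure_exists_isSAW_le P n _ (fun γ γ' h => by simp only [heavySteps_congr h]) hwalk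
    _ = ENNReal.ofReal (sawCount n * n.choose m * (1 / 3) ^ m) := by
        rw [ENNReal.ofReal_mul (by positivity), ENNReal.ofReal_mul (by positivity),
          ENNReal.ofReal_pow (by norm_num), ENNReal.ofReal_natCast, ENNReal.ofReal_natCast,
          mul_assoc]

theorem eventually_saw_heavySteps_general
    {Ω : Type} [MeasurableSpace Ω] (P : Measure Ω)
    (F : Measure ℝ) (hF : F (Set.Iio 0) = 0)
    (w : Edge → Ω → ℝ) (hmeas : ∀ e, Measurable (w e))
    (hindep : ProbabilityTheory.iIndepFun w P)
    (hdist : ∀ e, Measure.map (w e) P = F)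
    (hcount : ∀ᶠ n in atTop, (sawCount n : ℝ) ≤ 2.7 ^ n) :
    ∀ᵐ x ∂P, ∀ᶠ n in atTop, ∀ γ : ℕ → V, IsSAW γ n →
      (n : ℝ) / 100 ≤ (heavySteps (fun e => w e x) (quantile F (1 / 3)) γ n : ℝ) := by
  set bound : ℕ → ℝ := fun n => sawCount n * n.choose (n - n / 100) * (1 / 3) ^ (n - n / 100)
  have hsummable : Summable bound := by
    refine .of_norm_bounded_eventually_nat (summable_geometric_of_lt_one (r := 0.97)
      (by norm_num) (by norm_num)) (hcount.mono fun n hn => ?_)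
    rw [Real.norm_of_nonneg (by positivity)]
    calc bound n ≤ 2.7 ^ n * n.choose (n - n / 100) * (1 / 3) ^ (n - n / 100) := by
          simp only [bound]; gcongr
      _ ≤ 0.97 ^ n := pow_mul_choose_mul_pow_le n
  have htsum : ∑' n, P {x | ∃ γ, IsSAW γ n ∧
      (heavySteps (fun e => w e x) (quantile F (1 / 3)) γ n : ℝ) < n / 100} ≠ ∞ :=
    ne_top_of_le_ne_top ENNReal.ofReal_ne_top <|
      (ENNReal.tsum_le_tsum fun n =>
        measure_exists_isSAW_heavySteps_lt_le P hF hmeas hindep hdist n).trans_eq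
      (ENNReal.ofReal_tsum_of_nonneg (fun n => by positivity) hsummable).symm
  filter_upwards [ae_eventually_notMem htsum] with x hx
  filter_upwards [hx] with n hn γ hγ
  exact not_lt.1 fun h => hn ⟨γ, hγ, h⟩

/-- Borel–Cantelli consequence: almost surely, for all but finitely many `n`, every
self-avoiding walk of length `n` starting at the origin has at least `n/100` edges of
weight at least `t_{1/3}`. -/
theorem eventually_saw_heavySteps
    {Ω : Type} [MeasurableSpace Ω] (P : Measure Ω) [IsProbabilityMeasure P]
    (F : Measure ℝ) [IsProbabilityMeasure F] (hF : F (Set.Iio 0) = 0)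
    (w : Edge → Ω → ℝ) (hmeas : ∀ e, Measurable (w e)) (hnonneg : ∀ e x, 0 ≤ w e x)
    (hindep : ProbabilityTheory.iIndepFun w P)
    (hdist : ∀ e, Measure.map (w e) P = F)
    (hcount : ∀ᶠ n in atTop, (sawCount n : ℝ) ≤ 2.7 ^ n) :
    ∀ᵐ x ∂P, ∀ᶠ n in atTop, ∀ γ : ℕ → V, IsSAW γ n →
      (n : ℝ) / 100 ≤ (heavySteps (fun e => w e x) (quantile F (1 / 3)) γ n : ℝ) :=
  eventually_saw_heavySteps_general P F hF w hmeas hindep hdist hcount
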